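/- Let β ∈ ℝ, H a Hermitian operator on a finite-dimensional Hilbert space, and ρ = e^{-βH}/tr(e^{-βH}) the Gibbs state. Then for every N ∈ ℕ and every unitary U on ℋ^{⊗N} (with β > 0), the extracted work is non-positive: tr(ρ^{⊗N}H^{(N)}) - tr(Uρ^{⊗N}U†H^{(N)}) = -(1/β)·S(Uρ^{⊗N}U† ‖ ρ^{⊗N}) ≤ 0, where S(σ‖τ) = tr(σ(log σ - log τ)) is the quantum relative entropy and H^{(N)} = ∑_k I^{⊗(k-1)}⊗H⊗I^{⊗(N-k)}. -/

import Mathlib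

open Matrix ComplexOrder

/-- The operator acting as `H` on site `k` and as the identity elsewhere. -/
def siteOp {n : Type*} [Fintype n] [DecidableEq n] {ι : Type*} [Fintype ι] [DecidableEq ι]
    (H : Matrix n n ℂ) (k : ι) : Matrix (ι → n) (ι → n) ℂ :=
  Matrix.of fun a b => (if ∀ j, j ≠ k → a j = b j then 1 else 0) * H (a k) (b k)

/-- The extensive Hamiltonian `H^{(N)} = ∑_k I^{⊗(k-1)}⊗H⊗I^{⊗(N-k)}`. -/
noncomputable def extOp {n : Type*} [Fintype n] [DecidableEq n]
    (H : Matrix n n ℂ) (ι : Type*) [Fintype ι] [DecidableEq ι] :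
    Matrix (ι → n) (ι → n) ℂ :=
  ∑ k : ι, siteOp H k

/-- The tensor power `ρ^{⊗N}` of a state. -/
noncomputable def tensorState {n : Type*} [Fintype n]
    (ρ : Matrix n n ℂ) (ι : Type*) [Fintype ι] : Matrix (ι → n) (ι → n) ℂ :=
  Matrix.of fun a b => ∏ s : ι, ρ (a s) (b s)

/-- The logarithm of a Hermitian matrix, via its spectral decomposition. -/
noncomputable def matLog {n : Type*} [Fintype n] [DecidableEq n]
    (A : Matrix n n ℂ) (hA : A.IsHermitian) : Matrix n n ℂ :=
  (hA.eigenvectorUnitary : Matrix n n ℂ) *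
    Matrix.diagonal (fun i => (Real.log (hA.eigenvalues i) : ℂ)) *
    star (hA.eigenvectorUnitary : Matrix n n ℂ)


/-! Each site operator `siteOp A k` is the image of `Pi.mulSingle k A` under the multiplicative
map `A ↦ ⨂ₛ A s`, so site operators at different sites commute and
`exp H^{(N)} = (exp H)^{⊗N}`. Hence `ρ^{⊗N} = c • exp (-β H^{(N)})` with `c > 0`, and
`log ρ^{⊗N} = log c - β H^{(N)}`. As `log (U τ U†) = U (log τ) U†`, the relative entropy
`S(U τ U† ‖ τ)` equals `tr ((τ - U τ U†) log τ)`, which is `-β` times the extracted work.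
Klein's inequality `S(σ ‖ τ) ≥ tr σ - tr τ = 0` finishes the proof: in the eigenbases of `σ` and
`τ`, with weights `|⟨uᵢ, vⱼ⟩|²`, it is a sum of the nonnegative terms
`pᵢ log pᵢ - pᵢ log qⱼ - pᵢ + qⱼ`. -/

namespace Matrix

variable {ι n R : Type*} [Fintype ι] [CommSemiring R]

def piKronecker (A : ι → Matrix n n R) : Matrix (ι → n) (ι → n) R :=
  of fun a b => ∏ s, A s (a s) (b s)

theorem piKronecker_one [DecidableEq n] : piKronecker (1 : ι → Matrix n n R) = 1 := by
  ext a b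
  simp [piKronecker, one_apply, Finset.prod_boole, funext_iff]

variable [DecidableEq ι] [Fintype n]

theorem piKronecker_mul (A B : ι → Matrix n n R) :
    piKronecker A * piKronecker B = piKronecker (A * B) := by
  ext a b
  simp only [piKronecker, mul_apply, of_apply, Pi.mul_apply, Finset.prod_univ_sum,
    Fintype.piFinset_univ, Finset.prod_mul_distrib]

def piKroneckerHom [DecidableEq n] : (ι → Matrix n n R) →* Matrix (ι → n) (ι → n) R where
  toFun := piKronecker
  map_one' := piKronecker_one
  map_mul' A B := (piKronecker_mul A B).symm

end Matrix

section SiteOperators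

variable {ι n : Type*} [Fintype ι] [Fintype n]

theorem tensorState_eq_piKronecker (ρ : Matrix n n ℂ) :
    tensorState ρ ι = piKronecker fun _ => ρ := rfl

theorem tensorState_smul (c : ℂ) (ρ : Matrix n n ℂ) :
    tensorState (c • ρ) ι = c ^ Fintype.card ι • tensorState ρ ι := by
  ext a b
  simp [tensorState, Finset.prod_mul_distrib]

variable [DecidableEq ι] [DecidableEq n]

theorem siteOp_eq_piKronecker (A : Matrix n n ℂ) (k : ι) :
    siteOp A k = piKronecker (Pi.mulSingle k A) := by
  ext a b
  have hoff : ∀ s ∈ ({k}ᶜ : Finset ι),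
      (Pi.mulSingle k A : ι → Matrix n n ℂ) s (a s) (b s) = if a s = b s then 1 else 0 :=
    fun s hs => by rw [Pi.mulSingle_eq_of_ne (by simpa using hs), one_apply]
  rw [siteOp, piKronecker, of_apply, of_apply, Fintype.prod_eq_mul_prod_compl k,
    Pi.mulSingle_eq_same, mul_comm, Finset.prod_congr rfl hoff, Finset.prod_boole]
  simp

theorem pairwise_commute_siteOp (A B : Matrix n n ℂ) :
    Pairwise fun k l : ι => Commute (siteOp A k) (siteOp B l) := fun k l h => by
  show Commute _ _
  rw [siteOp_eq_piKronecker, siteOp_eq_piKronecker]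
  exact (Pi.mulSingle_commute h A B).map piKroneckerHom

theorem noncommProd_siteOp (A : Matrix n n ℂ) :
    Finset.univ.noncommProd (fun k => siteOp A k)
      ((pairwise_commute_siteOp A A).set_pairwise _) = tensorState A ι := by
  rw [tensorState_eq_piKronecker, ← Finset.noncommProd_mulSingle (fun _ : ι => A)]
  refine (Finset.noncommProd_congr rfl (fun k _ => siteOp_eq_piKronecker A k) _).trans ?_
  exact (Finset.map_noncommProd _ _ _ (piKroneckerHom (ι := ι) (n := n) (R := ℂ))).symm

def siteOpAlgHom (k : ι) : Matrix n n ℂ →ₐ[ℂ] Matrix (ι → n) (ι → n) ℂ :=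
  AlgHom.ofLinearMap
    { toFun A := siteOp A k
      map_add' A B := by ext a b; simp [siteOp, mul_add]
      map_smul' c A := by ext a b; simp [siteOp, mul_left_comm] }
    (by simp [siteOp_eq_piKronecker, piKronecker_one])
    (fun A B => by
      show siteOp (A * B) k = siteOp A k * siteOp B k
      simp only [siteOp_eq_piKronecker, piKronecker_mul, Pi.mulSingle_mul])

theorem exp_siteOp (A : Matrix n n ℂ) (k : ι) :
    NormedSpace.exp (siteOp A k) = siteOp (NormedSpace.exp A) k := by
  open scoped Matrix.Norms.Operator in
  exact (NormedSpace.map_exp (siteOpAlgHom k)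
    (LinearMap.continuous_of_finiteDimensional (siteOpAlgHom k).toLinearMap) A).symm

theorem exp_extOp (A : Matrix n n ℂ) :
    NormedSpace.exp (extOp A ι) = tensorState (NormedSpace.exp A) ι := by
  rw [extOp, Matrix.exp_sum_of_commute Finset.univ (fun k => siteOp A k)
    ((pairwise_commute_siteOp A A).set_pairwise _), ← noncommProd_siteOp]
  exact Finset.noncommProd_congr rfl (fun k _ => exp_siteOp A k) _

theorem siteOp_conjTranspose (A : Matrix n n ℂ) (k : ι) : (siteOp A k)ᴴ = siteOp Aᴴ k := by
  ext a b
  simp [siteOp, eq_comm, apply_ite (starRingEnd ℂ)]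

theorem extOp_isHermitian {A : Matrix n n ℂ} (hA : A.IsHermitian) : (extOp A ι).IsHermitian := by
  simp [IsHermitian, extOp, conjTranspose_sum, siteOp_conjTranspose, hA.eq]

theorem extOp_smul (c : ℂ) (A : Matrix n n ℂ) : extOp (c • A) ι = c • extOp A ι := by
  simp only [extOp, Finset.smul_sum]
  congr! 1 with k
  ext a b
  simp [siteOp, mul_left_comm]

end SiteOperators

namespace Matrix.IsHermitian

variable {m : Type*} [Fintype m] [DecidableEq m] {A B : Matrix m m ℂ}

theorem matLog_eq_cfc (hA : A.IsHermitian) : matLog A hA = hA.cfc Real.log := by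
  rw [IsHermitian.cfc, Unitary.conjStarAlgAut_apply, matLog]
  rfl

theorem cfc_mul_cfc (hA : A.IsHermitian) (f g : ℝ → ℝ) :
    hA.cfc f * hA.cfc g = hA.cfc fun x => f x * g x := by
  simp only [IsHermitian.cfc, ← map_mul, diagonal_mul_diagonal]
  congr 2
  funext i
  simp

theorem cfc_id_eq (hA : A.IsHermitian) : hA.cfc id = A := hA.spectral_theorem.symm

theorem cfc_one_eq (hA : A.IsHermitian) : hA.cfc (fun _ => 1) = 1 := by
  simp [IsHermitian.cfc, Function.comp_def]

theorem trace_cfc_mul_cfc (hA : A.IsHermitian) (hB : B.IsHermitian) (f g : ℝ → ℝ) :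
    (hA.cfc f * hB.cfc g).trace = ∑ i, ∑ j, ((f (hA.eigenvalues i) * g (hB.eigenvalues j) *
      Complex.normSq ((star (hA.eigenvectorUnitary : Matrix m m ℂ) *
        hB.eigenvectorUnitary) i j) : ℝ) : ℂ) := by
  set W : Matrix m m ℂ := ↑hA.eigenvectorUnitary
  set V : Matrix m m ℂ := ↑hB.eigenvectorUnitary
  set M := star W * V
  have hcycle : hA.cfc f * hB.cfc g =
      W * (diagonal (fun i => (f (hA.eigenvalues i) : ℂ)) * M *
        diagonal (fun j => (g (hB.eigenvalues j) : ℂ)) * star V) := by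
    simp only [IsHermitian.cfc, Unitary.conjStarAlgAut_apply, M, Matrix.mul_assoc]
    rfl
  rw [hcycle, trace_mul_comm, Matrix.mul_assoc _ (star V) W,
    show star V * W = star M by simp [M]]
  refine Finset.sum_congr rfl fun i _ => ?_
  rw [diag_apply, mul_apply]
  refine Finset.sum_congr rfl fun j _ => ?_
  rw [mul_diagonal, diagonal_mul, star_apply, Complex.ofReal_mul, Complex.normSq_eq_conj_mul_self,
    Complex.star_def]
  push_cast
  ring

end Matrix.IsHermitian

theorem Real.sub_le_mul_log_sub_log {p q : ℝ} (hp : 0 < p) (hq : 0 < q) :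
    p - q ≤ p * (Real.log p - Real.log q) := by
  have h := Real.one_sub_inv_le_log_of_pos (div_pos hp hq)
  rw [Real.log_div hp.ne' hq.ne', inv_div] at h
  have := mul_le_mul_of_nonneg_left h hp.le
  rwa [mul_sub, mul_one, mul_div_cancel₀ _ hp.ne'] at this

theorem Matrix.PosDef.klein_inequality {m : Type*} [Fintype m] [DecidableEq m]
    {A B : Matrix m m ℂ} (hA : A.PosDef) (hB : B.PosDef) :
    (A.trace - B.trace).re ≤
      (A * (matLog A hA.isHermitian - matLog B hB.isHermitian)).trace.re := by
  set p := hA.isHermitian.eigenvalues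
  set q := hB.isHermitian.eigenvalues
  set w := fun i j => Complex.normSq ((star (hA.isHermitian.eigenvectorUnitary : Matrix m m ℂ) *
    hB.isHermitian.eigenvectorUnitary) i j)
  have htrace (f g : ℝ → ℝ) : (hA.isHermitian.cfc f * hB.isHermitian.cfc g).trace.re =
      ∑ i, ∑ j, f (p i) * g (q j) * w i j := by
    simp only [hA.isHermitian.trace_cfc_mul_cfc, Complex.re_sum, Complex.ofReal_re]
    rfl
  have hdiff : A.trace - B.trace =
      (hA.isHermitian.cfc id * hB.isHermitian.cfc (fun _ => 1)).trace -
        (hA.isHermitian.cfc (fun _ => 1) * hB.isHermitian.cfc id).trace := by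
    rw [IsHermitian.cfc_id_eq, IsHermitian.cfc_id_eq, IsHermitian.cfc_one_eq,
      IsHermitian.cfc_one_eq, mul_one, one_mul]
  have hrel : A * (matLog A hA.isHermitian - matLog B hB.isHermitian) =
      hA.isHermitian.cfc (fun x => x * Real.log x) * hB.isHermitian.cfc (fun _ => 1) -
        hA.isHermitian.cfc id * hB.isHermitian.cfc Real.log := by
    rw [IsHermitian.matLog_eq_cfc, IsHermitian.matLog_eq_cfc, mul_sub, IsHermitian.cfc_one_eq,
      mul_one, IsHermitian.cfc_id_eq]
    congr 1
    calc A * hA.isHermitian.cfc Real.log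
        = hA.isHermitian.cfc id * hA.isHermitian.cfc Real.log := by rw [IsHermitian.cfc_id_eq]
      _ = _ := hA.isHermitian.cfc_mul_cfc _ _
  rw [hdiff, hrel, trace_sub, Complex.sub_re, Complex.sub_re, htrace, htrace, htrace, htrace,
    ← Finset.sum_sub_distrib, ← Finset.sum_sub_distrib]
  refine Finset.sum_le_sum fun i _ => ?_
  rw [← Finset.sum_sub_distrib, ← Finset.sum_sub_distrib]
  refine Finset.sum_le_sum fun j _ => ?_
  have hpq := Real.sub_le_mul_log_sub_log (hA.eigenvalues_pos i) (hB.eigenvalues_pos j)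
  have hw : 0 ≤ w i j := Complex.normSq_nonneg _
  simp only [id]
  nlinarith

section UnitaryConj

variable {m : Type*} [Fintype m] [DecidableEq m]

theorem trace_unitary_conj {α : Type*} [CommRing α] [StarRing α] {U : Matrix m m α}
    (hU : U ∈ unitaryGroup m α) (X : Matrix m m α) :
    (U * X * Uᴴ).trace = X.trace := by
  rw [trace_mul_comm, ← Matrix.mul_assoc, ← star_eq_conjTranspose,
    mem_unitaryGroup_iff'.mp hU, Matrix.one_mul]

theorem matLog_unitary_conj {U A : Matrix m m ℂ} (hU : U ∈ unitaryGroup m ℂ) (hA : A.IsHermitian)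
    (hUA : (U * A * Uᴴ).IsHermitian) : matLog (U * A * Uᴴ) hUA = U * matLog A hA * Uᴴ := by
  have hconj := StarAlgHomClass.map_cfc (Unitary.conjStarAlgAut ℂ (Matrix m m ℂ) ⟨U, hU⟩)
    Real.log A (by rw [continuousOn_iff_continuous_domRestrict]; fun_prop)
    (LinearMap.continuous_of_finiteDimensional
      (Unitary.conjStarAlgAut ℂ (Matrix m m ℂ) ⟨U, hU⟩).toAlgEquiv.toLinearMap)
    hA.isSelfAdjoint hUA.isSelfAdjoint
  rw [hUA.matLog_eq_cfc, hA.matLog_eq_cfc, ← hUA.cfc_eq, ← hA.cfc_eq]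
  exact hconj.symm

theorem relEntropy_unitary_conj_of_matLog_eq {U τ K : Matrix m m ℂ} (hU : U ∈ unitaryGroup m ℂ)
    (hτ : τ.IsHermitian) (hσ : (U * τ * Uᴴ).IsHermitian) {a b : ℂ}
    (hlog : matLog τ hτ = a • 1 + b • K) :
    (U * τ * Uᴴ * (matLog (U * τ * Uᴴ) hσ - matLog τ hτ)).trace =
      b * ((τ * K).trace - (U * τ * Uᴴ * K).trace) := by
  have hconj : U * τ * Uᴴ * (U * matLog τ hτ * Uᴴ) = U * (τ * matLog τ hτ) * Uᴴ := by
    rw [← star_eq_conjTranspose]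
    calc U * τ * star U * (U * matLog τ hτ * star U)
        = U * τ * (star U * U) * matLog τ hτ * star U := by simp only [Matrix.mul_assoc]
      _ = U * (τ * matLog τ hτ) * star U := by
        rw [mem_unitaryGroup_iff'.mp hU, Matrix.mul_one, Matrix.mul_assoc U]
  rw [matLog_unitary_conj hU hτ, mul_sub, hconj, trace_sub, trace_unitary_conj hU, ← trace_sub,
    ← sub_mul,
    hlog]
  simp only [mul_add, Matrix.mul_smul, Matrix.mul_one, trace_add, trace_smul, sub_mul, trace_sub,
    trace_unitary_conj hU, smul_eq_mul]
  ring

end UnitaryConj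

section Positivity

variable {m : Type*} [Fintype m] [DecidableEq m]

theorem Matrix.IsHermitian.posDef_exp {X : Matrix m m ℂ} (hX : X.IsHermitian) :
    (NormedSpace.exp X).PosDef := by
  open scoped Matrix.Norms.L2Operator MatrixOrder in
  exact ((Matrix.isUnit_exp X).isStrictlyPositive hX.isSelfAdjoint.exp_nonneg).posDef

theorem matLog_smul_exp {X : Matrix m m ℂ} (hX : X.IsHermitian) {c : ℝ} (hc : 0 < c)
    (h : ((c : ℂ) • NormedSpace.exp X).IsHermitian) :
    matLog ((c : ℂ) • NormedSpace.exp X) h = (Real.log c : ℂ) • 1 + X := by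
  open scoped Matrix.Norms.L2Operator MatrixOrder in
  have hlog := CFC.log_smul' (NormedSpace.exp X) hc hX.posDef_exp.isStrictlyPositive
  rw [CFC.log_exp X hX.isSelfAdjoint, Algebra.algebraMap_eq_smul_one] at hlog
  rw [h.matLog_eq_cfc, ← h.cfc_eq, Complex.coe_smul, Complex.coe_smul]
  exact hlog

theorem exists_tensorState_gibbs_eq_smul_exp_extOp {n ι : Type*} [Fintype n] [DecidableEq n]
    [Fintype ι] [DecidableEq ι] [Nonempty (ι → n)] {K : Matrix n n ℂ} (hK : K.IsHermitian) :
    ∃ c : ℝ, 0 < c ∧ tensorState ((NormedSpace.exp K).trace⁻¹ • NormedSpace.exp K) ι =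
      (c : ℂ) • NormedSpace.exp (extOp K ι) := by
  have hc : 0 < (NormedSpace.exp K).trace⁻¹ ^ Fintype.card ι := by
    rcases isEmpty_or_nonempty ι with hι | ⟨⟨i⟩⟩
    · simp
    · have : Nonempty n := ⟨Classical.arbitrary (ι → n) i⟩
      exact pow_pos (RCLike.inv_pos_of_pos hK.posDef_exp.trace_pos) _
  obtain ⟨c, hc, hc'⟩ := RCLike.pos_iff_exists_ofReal.mp hc
  exact ⟨c, hc, by rw [tensorState_smul, exp_extOp, ← hc']; rfl⟩

end Positivity

theorem gibbs_completely_passive {n : Type*} [Fintype n] [DecidableEq n]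
    (H : Matrix n n ℂ) (hH : H.IsHermitian) (β : ℝ) (hβ : 0 < β) (N : ℕ)
    (U : Matrix (Fin N → n) (Fin N → n) ℂ)
    (hU : U ∈ Matrix.unitaryGroup (Fin N → n) ℂ) :
    let ρ : Matrix n n ℂ :=
      ((NormedSpace.exp ((-(β : ℂ)) • H)).trace)⁻¹ • NormedSpace.exp ((-(β : ℂ)) • H)
    let τ : Matrix (Fin N → n) (Fin N → n) ℂ := tensorState ρ (Fin N)
    let HN : Matrix (Fin N → n) (Fin N → n) ℂ := extOp H (Fin N)
    ∀ (h₁ : (U * τ * Uᴴ).IsHermitian) (h₂ : τ.IsHermitian),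
      ((τ * HN).trace - (U * τ * Uᴴ * HN).trace).re
        = -(1 / β) *
            (((U * τ * Uᴴ) * (matLog (U * τ * Uᴴ) h₁ - matLog τ h₂)).trace).re ∧
      ((τ * HN).trace - (U * τ * Uᴴ * HN).trace).re ≤ 0 := by
  intro ρ τ HN hσ hτ
  rcases isEmpty_or_nonempty (Fin N → n) with hempty | hne
  · simp [Matrix.trace]
  have hβ' : IsSelfAdjoint (-(β : ℂ)) := IsSelfAdjoint.neg (Complex.conj_ofReal β)
  have hβHN : ((-(β : ℂ)) • HN).IsHermitian := (extOp_isHermitian hH).smul hβ'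
  obtain ⟨c, hc, hτc⟩ : ∃ c : ℝ, 0 < c ∧ τ = (c : ℂ) • NormedSpace.exp ((-(β : ℂ)) • HN) := by
    simpa only [extOp_smul] using
      exists_tensorState_gibbs_eq_smul_exp_extOp (ι := Fin N) (hH.smul hβ')
  clear_value τ
  have hτPD : τ.PosDef := hτc ▸ hβHN.posDef_exp.smul (Complex.zero_lt_real.mpr hc)
  have hσPD : (U * τ * Uᴴ).PosDef :=
    (IsUnit.posDef_star_right_conjugate_iff (Unitary.isUnit_coe (U := ⟨U, hU⟩))).mpr hτPD
  have hlogτ : matLog τ hτ = (Real.log c : ℂ) • 1 + (-(β : ℂ)) • HN := by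
    subst hτc
    exact matLog_smul_exp hβHN hc hτ
  have hS : (U * τ * Uᴴ * (matLog (U * τ * Uᴴ) hσ - matLog τ hτ)).trace.re =
      -β * ((τ * HN).trace - (U * τ * Uᴴ * HN).trace).re := by
    rw [relEntropy_unitary_conj_of_matLog_eq hU hτ hσ hlogτ, ← Complex.ofReal_neg,
      Complex.re_ofReal_mul]
  have hK := hσPD.klein_inequality hτPD
  rw [trace_unitary_conj hU, sub_self, Complex.zero_re, hS] at hK
  exact ⟨by rw [hS]; field_simp, by nlinarith⟩
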